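/- Let Γ=(G,σ) be a signed graph on n vertices. For every real q≥1 and every 1≤k≤n: L_k(Γ) = min_{B∈F_k(S_q)} max_{g∈B} R^σ_{q,∞}(g), where R^σ_{q,∞}(g) = (Σ_{{i,j}∈E} w_{ij}·(max{−g(i)σ_{ij}g(j), 0})^{q/2}) / (Σ_{i∈V} μ_i|g(i)|^q) for nonzero g:V→ℝ. -/

import Mathlib

open Filter Topology Polynomial
open scoped Classical

noncomputable section

variable {V : Type} [Fintype V] [DecidableEq V]

/-- Sum of a (symmetric) summand over the unordered edges of `G`. -/
def sgEdgeSum (G : SimpleGraph V) (F : V → V → ℝ) : ℝ :=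
  (∑ i : V, ∑ j : V, if G.Adj i j then F i j else 0) / 2

/-- The Rayleigh quotient `R_p^σ` of the signed graph `p`-Laplacian with
edge weight `w`, signature `sgn`, vertex measure `μ` and potential `κ`. -/
def sgRayleigh (G : SimpleGraph V) (w sgn : V → V → ℝ) (μ κ : V → ℝ)
    (p : ℝ) (f : V → ℝ) : ℝ :=
  (sgEdgeSum G (fun i j => w i j * |f i - sgn i j * f j| ^ p) +
      ∑ i : V, κ i * |f i| ^ p) /
    ∑ i : V, μ i * |f i| ^ p

/-- The unit sphere `S_p` of `ℓ^p(μ)`. -/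
def pSphere (μ : V → ℝ) (p : ℝ) : Set (V → ℝ) :=
  {f | ∑ i : V, μ i * |f i| ^ p = 1}

/-- There is an odd continuous map from `B` into `ℝ^m ∖ {0}`. -/
def hasOddMapInto (B : Set (V → ℝ)) (m : ℕ) : Prop :=
  ∃ h : (V → ℝ) → (Fin m → ℝ),
    ContinuousOn h B ∧ (∀ x ∈ B, h x ≠ 0) ∧ (∀ x ∈ B, h (-x) = -(h x))

/-- The Krasnoselskii genus of `B` is at least `k`. -/
def genusGe (B : Set (V → ℝ)) (k : ℕ) : Prop :=
  ∀ m, m < k → ¬ hasOddMapInto B m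

/-- The family `F_k(S_p)` of closed symmetric subsets of the sphere `S_p`
with Krasnoselskii genus at least `k`. -/
def genusFamily (μ : V → ℝ) (p : ℝ) (k : ℕ) : Set (Set (V → ℝ)) :=
  {B | B ⊆ pSphere μ p ∧ IsClosed B ∧ (∀ x ∈ B, -x ∈ B) ∧ genusGe B k}

/-- The `k`-th variational eigenvalue `λ_k^{(p)}` of the signed graph `p`-Laplacian. -/
def varEig (G : SimpleGraph V) (w sgn : V → V → ℝ) (μ κ : V → ℝ)
    (p : ℝ) (k : ℕ) : ℝ :=
  sInf ((fun B => sSup (sgRayleigh G w sgn μ κ p '' B)) '' genusFamily μ p k)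

/-- The `k`-th smallest real root (1-indexed, counted with multiplicity) of the
characteristic polynomial of `A`; for a matrix with real spectrum this is the
`k`-th eigenvalue `λ_k(A)` in the ordering `λ_1 ≤ … ≤ λ_n`. -/
def eigval {m : Type} [Fintype m] [DecidableEq m] (A : Matrix m m ℝ) (k : ℕ) : ℝ :=
  (Multiset.sort A.charpoly.roots (· ≤ ·)).getD (k - 1) 0

/-- The normalized adjacency matrix `A^μ_{-Γ}` of the negation of the signed graph
`(H, sgn)` with edge weight `w` and vertex measure `μ`. -/
def negAdj (H : SimpleGraph V) (w sgn : V → V → ℝ) (μ : V → ℝ) : Matrix V V ℝ :=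
  fun i j => if H.Adj i j then -(sgn i j) * w i j / μ i else 0

/-- The normalized adjacency matrix `A^μ_{-Γ₀}` of the negation of the subgraph of
`(H, sgn)` with vertex set `s`, with restricted edge weight and vertex measure. -/
def negAdjSub (H : SimpleGraph V) (s : Finset V) (w sgn : V → V → ℝ) (μ : V → ℝ) :
    Matrix {x // x ∈ s} {x // x ∈ s} ℝ :=
  fun i j => if H.Adj ↑i ↑j then -(sgn ↑i ↑j) * w ↑i ↑j / μ ↑i else 0

/-- The subgraph of `G` induced on the vertex set `s`. -/
def inducedGraph (G : SimpleGraph V) (s : Finset V) : SimpleGraph {x // x ∈ s} where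
  Adj i j := G.Adj ↑i ↑j
  symm := ⟨fun _ _ h => G.adj_symm h⟩
  loopless := ⟨fun i h => G.irrefl (v := ↑i) h⟩

/-- `G` has an edge cover of cardinality `m`. -/
def edgeCoverCard {α : Type} (G : SimpleGraph α) (m : ℕ) : Prop :=
  ∃ C : Finset (Sym2 α), (C : Set (Sym2 α)) ⊆ G.edgeSet ∧
    (∀ v : α, ∃ e ∈ C, v ∈ e) ∧ C.card = m

/-- The cut-off Rayleigh-type quotient `R^σ_{q,∞}`. -/
def cutRayleigh (G : SimpleGraph V) (w sgn : V → V → ℝ) (μ : V → ℝ)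
    (q : ℝ) (g : V → ℝ) : ℝ :=
  sgEdgeSum G (fun i j => w i j * (max (-(g i * sgn i j * g j)) 0) ^ (q / 2)) /
    ∑ i : V, μ i * |g i| ^ q

/-!
The signed powers `f ↦ sign f · |f| ^ (q / p)` and `g ↦ sign g · |g| ^ (p / q)` are mutually
inverse odd homeomorphisms between the spheres `S_q` and `S_p`, so they carry `F_k(S_q)` and
`F_k(S_p)` into each other and the two min–max values can be compared pointwise along them.

Edge by edge, AM–GM gives `max (-a c) 0 ^ (p / 2) ≤ (|a - c| / 2) ^ p`, so `R_{q,∞}` at the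
transported point is at most `2^{-p} R_p`. Conversely, at an edge whose endpoint values have
opposite signs, `2^{-p} |x - y| ^ p` is the power mean `((u^{1/p} + v^{1/p}) / 2) ^ p` of
`u = |a| ^ q`, `v = |c| ^ q`, which converges to `√(u v) = max (-a c) 0 ^ (q / 2)` uniformly for
`u, v` bounded (as they are on the sphere); at the other edges it tends to `0`. The potential only
contributes `O(2^{-p})`, so `2^{-p} λ_k^{(p)}` is squeezed to the min–max value of `R_{q,∞}`.
-/

section PowerMean

open Real

lemma abs_sub_eq_abs_add_abs_of_mul_neg {a c : ℝ} (h : a * c < 0) : |a - c| = |a| + |c| := by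
  rcases mul_neg_iff.mp h with ⟨ha, hc⟩ | ⟨ha, hc⟩
  · rw [abs_of_pos ha, abs_of_neg hc, abs_of_pos (by linarith)]; ring
  · rw [abs_of_neg ha, abs_of_pos hc, abs_of_neg (by linarith)]; ring

lemma abs_sub_le_max_abs_of_mul_nonneg {a c : ℝ} (h : 0 ≤ a * c) : |a - c| ≤ max |a| |c| := by
  rcases mul_nonneg_iff.mp h with ⟨ha, hc⟩ | ⟨ha, hc⟩
  · rw [abs_of_nonneg ha, abs_of_nonneg hc, abs_sub_le_iff]
    constructor <;> linarith [le_max_left a c, le_max_right a c]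
  · rw [abs_of_nonpos ha, abs_of_nonpos hc, abs_sub_le_iff]
    constructor <;> linarith [le_max_left (-a) (-c), le_max_right (-a) (-c)]

lemma rpow_max_neg_mul_le_half_abs_sub_rpow {p : ℝ} (hp : 0 < p) (a c : ℝ) :
    max (-(a * c)) 0 ^ (p / 2) ≤ (|a - c| / 2) ^ p := by
  rcases le_or_gt 0 (a * c) with hac | hac
  · rw [max_eq_right (neg_nonpos.mpr hac), zero_rpow (by positivity)]
    positivity
  · have hprod : max (-(a * c)) 0 = |a| * |c| := by
      rw [max_eq_left (by linarith), ← abs_mul, abs_of_neg hac]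
    have hamgm : |a| * |c| ≤ (|a - c| / 2) ^ 2 := by
      rw [abs_sub_eq_abs_add_abs_of_mul_neg hac]
      nlinarith [sq_nonneg (|a| - |c|)]
    calc max (-(a * c)) 0 ^ (p / 2) ≤ ((|a - c| / 2) ^ 2) ^ (p / 2) :=
          rpow_le_rpow (le_max_right _ _) (hprod ▸ hamgm) (by positivity)
      _ = (|a - c| / 2) ^ p := by
          rw [← rpow_natCast_mul (by positivity)]
          ring_nf

lemma max_abs_rpow_le {p R a c : ℝ} (ha : |a| ^ p ≤ R) (hc : |c| ^ p ≤ R) :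
    max |a| |c| ^ p ≤ R := by
  rcases max_choice |a| |c| with hm | hm <;> rwa [hm]

lemma half_abs_sub_rpow_le {p R a c : ℝ} (hp : 0 ≤ p) (ha : |a| ^ p ≤ R)
    (hc : |c| ^ p ≤ R) :
    (|a - c| / 2) ^ p ≤ R := by
  have h : |a - c| / 2 ≤ max |a| |c| := by
    linarith [abs_sub a c, le_max_left |a| |c|, le_max_right |a| |c|]
  calc (|a - c| / 2) ^ p ≤ max |a| |c| ^ p := rpow_le_rpow (by positivity) h hp
    _ ≤ R := max_abs_rpow_le ha hc

lemma half_add_rpow_le_of_le_one_sub_mul {p δ x y : ℝ} (hp : 0 ≤ p) (hx : 0 ≤ x)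
    (hy : 0 ≤ y) (hyx : y ≤ (1 - δ) * x) :
    ((x + y) / 2) ^ p ≤ x ^ p * exp (-(p * δ / 2)) := by
  have h : (x + y) / 2 ≤ x * exp (-(δ / 2)) := by
    nlinarith [mul_le_mul_of_nonneg_left (one_sub_le_exp_neg (δ / 2)) hx]
  calc ((x + y) / 2) ^ p ≤ (x * exp (-(δ / 2))) ^ p := rpow_le_rpow (by positivity) h hp
    _ = x ^ p * exp (-(p * δ / 2)) := by
        rw [mul_rpow hx (exp_pos _).le, ← exp_mul]
        ring_nf

lemma half_add_rpow_le_of_one_sub_mul_le {p δ x y : ℝ} (hp : 0 ≤ p)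
    (hδ : δ ≤ 1 / 2) (hy : 0 ≤ y) (hyx : y ≤ x) (hxy : (1 - δ) * x ≤ y) :
    ((x + y) / 2) ^ p ≤ (x * y) ^ (p / 2) * exp (p * δ ^ 2 / 4) := by
  have hx : 0 ≤ x := hy.trans hyx
  have hsq : ((x + y) / 2) ^ 2 ≤ x * y * exp (δ ^ 2 / 2) := by
    have hdiff : (x - y) ^ 2 ≤ δ ^ 2 * x ^ 2 := by nlinarith
    have hxx : x ^ 2 ≤ 2 * (x * y) := by nlinarith
    nlinarith [mul_le_mul_of_nonneg_left (add_one_le_exp (δ ^ 2 / 2)) (mul_nonneg hx hy)]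
  calc ((x + y) / 2) ^ p = (((x + y) / 2) ^ 2) ^ (p / 2) := by
        rw [← rpow_natCast_mul (by positivity)]
        ring_nf
    _ ≤ (x * y * exp (δ ^ 2 / 2)) ^ (p / 2) := rpow_le_rpow (by positivity) hsq (by positivity)
    _ = (x * y) ^ (p / 2) * exp (p * δ ^ 2 / 4) := by
        rw [mul_rpow (by positivity) (exp_pos _).le, ← exp_mul]
        ring_nf

def powerMeanError (p δ : ℝ) : ℝ := (exp (p * δ ^ 2 / 4) - 1) + exp (-(p * δ / 2))

lemma exp_sub_one_le_powerMeanError (p δ : ℝ) :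
    exp (p * δ ^ 2 / 4) - 1 ≤ powerMeanError p δ :=
  le_add_of_nonneg_right (exp_pos _).le

lemma exp_neg_le_powerMeanError {p : ℝ} (hp : 0 ≤ p) (δ : ℝ) :
    exp (-(p * δ / 2)) ≤ powerMeanError p δ :=
  le_add_of_nonneg_left (sub_nonneg.mpr (one_le_exp (by positivity)))

lemma powerMeanError_nonneg {p : ℝ} (hp : 0 ≤ p) (δ : ℝ) : 0 ≤ powerMeanError p δ :=
  (exp_pos _).le.trans (exp_neg_le_powerMeanError hp δ)

lemma half_add_rpow_le_of_le {p δ R x y : ℝ} (hp : 0 ≤ p) (hδ : δ ≤ 1 / 2)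
    (hy : 0 ≤ y) (hyx : y ≤ x) (hxR : x ^ p ≤ R) :
    ((x + y) / 2) ^ p ≤ (x * y) ^ (p / 2) + R * powerMeanError p δ := by
  have hx : 0 ≤ x := hy.trans hyx
  have hR : 0 ≤ R := (rpow_nonneg hx p).trans hxR
  have hgeom : (x * y) ^ (p / 2) ≤ R := by
    calc (x * y) ^ (p / 2) ≤ (x ^ 2) ^ (p / 2) :=
          rpow_le_rpow (by positivity) (by nlinarith) (by positivity)
      _ = x ^ p := by rw [← rpow_natCast_mul hx]; ring_nf
      _ ≤ R := hxR
  rcases le_or_gt y ((1 - δ) * x) with hfar | hnear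
  · calc ((x + y) / 2) ^ p ≤ x ^ p * exp (-(p * δ / 2)) :=
          half_add_rpow_le_of_le_one_sub_mul hp hx hy hfar
      _ ≤ R * powerMeanError p δ :=
          mul_le_mul hxR (exp_neg_le_powerMeanError hp δ) (exp_pos _).le hR
      _ ≤ _ := le_add_of_nonneg_left (by positivity)
  · have hexp := exp_sub_one_le_powerMeanError p δ
    have hexp0 : 0 ≤ exp (p * δ ^ 2 / 4) - 1 := sub_nonneg.mpr (one_le_exp (by positivity))
    calc ((x + y) / 2) ^ p ≤ (x * y) ^ (p / 2) * exp (p * δ ^ 2 / 4) :=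
          half_add_rpow_le_of_one_sub_mul_le hp hδ hy hyx hnear.le
      _ = (x * y) ^ (p / 2) + (x * y) ^ (p / 2) * (exp (p * δ ^ 2 / 4) - 1) := by ring
      _ ≤ _ := add_le_add_right (mul_le_mul hgeom hexp hexp0 hR) _

lemma half_add_rpow_le {p δ R x y : ℝ} (hp : 0 ≤ p) (hδ : δ ≤ 1 / 2)
    (hx : 0 ≤ x) (hy : 0 ≤ y) (hxR : x ^ p ≤ R) (hyR : y ^ p ≤ R) :
    ((x + y) / 2) ^ p ≤ (x * y) ^ (p / 2) + R * powerMeanError p δ := by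
  rcases le_total y x with hyx | hxy
  · exact half_add_rpow_le_of_le hp hδ hy hyx hxR
  · rw [add_comm, mul_comm]
    exact half_add_rpow_le_of_le hp hδ hx hxy hyR

lemma half_abs_sub_rpow_le_of_mul_nonneg {p δ R a c : ℝ} (hp : 0 ≤ p) (hδ : δ ≤ 1)
    (hac : 0 ≤ a * c) (ha : |a| ^ p ≤ R) (hc : |c| ^ p ≤ R) :
    (|a - c| / 2) ^ p ≤ R * powerMeanError p δ := by
  set m := max |a| |c|
  have hm : m ^ p ≤ R := max_abs_rpow_le ha hc
  have hm0 : 0 ≤ m := (abs_nonneg a).trans (le_max_left _ _)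
  calc (|a - c| / 2) ^ p ≤ ((m + 0) / 2) ^ p :=
        rpow_le_rpow (by positivity) (by linarith [abs_sub_le_max_abs_of_mul_nonneg hac]) hp
    _ ≤ m ^ p * exp (-(p * δ / 2)) :=
        half_add_rpow_le_of_le_one_sub_mul hp hm0 le_rfl (by nlinarith)
    _ ≤ R * powerMeanError p δ :=
        mul_le_mul hm (exp_neg_le_powerMeanError hp δ) (exp_pos _).le
          ((rpow_nonneg hm0 p).trans hm)

end PowerMean

section SignedRpow

open Real

def signedRpow (t a : ℝ) : ℝ := SignType.sign a * |a| ^ t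

lemma signedRpow_neg (t a : ℝ) : signedRpow t (-a) = -signedRpow t a := by
  simp [signedRpow, Left.sign_neg]

lemma signedRpow_mul (t a b : ℝ) :
    signedRpow t (a * b) = signedRpow t a * signedRpow t b := by
  simp only [signedRpow, sign_mul, SignType.coe_mul, abs_mul,
    mul_rpow (abs_nonneg a) (abs_nonneg b)]
  ring

lemma abs_pm_one_mul {s : ℝ} (hs : s = 1 ∨ s = -1) (a : ℝ) : |s * a| = |a| := by
  rcases hs with rfl | rfl <;> simp

lemma signedRpow_pm_one_mul {s : ℝ} (hs : s = 1 ∨ s = -1) (t a : ℝ) :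
    signedRpow t (s * a) = s * signedRpow t a := by
  rcases hs with rfl | rfl <;> simp [signedRpow_neg]

lemma signedRpow_one (a : ℝ) : signedRpow 1 a = a := by
  simp [signedRpow]

lemma signedRpow_of_pos {a : ℝ} (ha : 0 < a) (t : ℝ) : signedRpow t a = a ^ t := by
  simp [signedRpow, _root_.sign_pos ha, abs_of_pos ha]

lemma signedRpow_of_neg {a : ℝ} (ha : a < 0) (t : ℝ) : signedRpow t a = -(-a) ^ t := by
  simp [signedRpow, _root_.sign_neg ha, abs_of_neg ha]

lemma signedRpow_nonneg {a : ℝ} (ha : 0 ≤ a) (t : ℝ) : 0 ≤ signedRpow t a := by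
  rcases ha.eq_or_lt with rfl | ha
  · simp [signedRpow]
  · rw [signedRpow_of_pos ha]
    positivity

lemma signedRpow_lt_zero {a : ℝ} (ha : a < 0) (t : ℝ) : signedRpow t a < 0 := by
  rw [signedRpow_of_neg ha, neg_lt_zero]
  exact rpow_pos_of_pos (neg_pos.mpr ha) t

lemma abs_signedRpow {t : ℝ} (ht : t ≠ 0) (a : ℝ) : |signedRpow t a| = |a| ^ t := by
  rcases lt_trichotomy a 0 with ha | rfl | ha
  · rw [signedRpow_of_neg ha, abs_neg, abs_of_nonneg (rpow_nonneg (neg_nonneg.mpr ha.le) t),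
      abs_of_neg ha]
  · simp [signedRpow, zero_rpow ht]
  · rw [signedRpow_of_pos ha, abs_of_pos ha, abs_of_nonneg (by positivity)]

lemma signedRpow_signedRpow (s t a : ℝ) :
    signedRpow t (signedRpow s a) = signedRpow (s * t) a := by
  rcases lt_trichotomy a 0 with ha | rfl | ha
  · have hpos : 0 < (-a) ^ s := rpow_pos_of_pos (neg_pos.mpr ha) s
    rw [signedRpow_of_neg ha, signedRpow_of_neg (neg_neg_of_pos hpos), signedRpow_of_neg ha,
      neg_neg, ← rpow_mul (neg_nonneg.mpr ha.le)]
  · simp [signedRpow]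
  · rw [signedRpow_of_pos ha, signedRpow_of_pos (rpow_pos_of_pos ha s), signedRpow_of_pos ha,
      ← rpow_mul ha.le]

lemma max_signedRpow_zero {t : ℝ} (ht : t ≠ 0) (a : ℝ) :
    max (signedRpow t a) 0 = max a 0 ^ t := by
  rcases le_or_gt a 0 with ha | ha
  · rw [max_eq_right ha, zero_rpow ht, max_eq_right_iff]
    rcases ha.lt_or_eq with ha | rfl
    · exact (signedRpow_lt_zero ha t).le
    · simp [signedRpow]
  · rw [signedRpow_of_pos ha, max_eq_left ha.le, max_eq_left (by positivity)]

lemma continuous_signedRpow {t : ℝ} (ht : 0 < t) : Continuous (signedRpow t) := by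
  have h : signedRpow t = fun a => max a 0 ^ t - max (-a) 0 ^ t := by
    funext a
    rcases lt_trichotomy a 0 with ha | rfl | ha
    · rw [signedRpow_of_neg ha, max_eq_right ha.le, max_eq_left (by linarith), zero_rpow ht.ne']
      ring
    · simp [signedRpow, zero_rpow ht.ne']
    · rw [signedRpow_of_pos ha, max_eq_left ha.le, max_eq_right (by linarith), zero_rpow ht.ne']
      ring
  rw [h]
  exact ((continuous_id.max continuous_const).rpow_const fun _ => Or.inr ht.le).sub
    ((continuous_neg.max continuous_const).rpow_const fun _ => Or.inr ht.le)

def signedRpowHomeomorph {t : ℝ} (ht : 0 < t) : ℝ ≃ₜ ℝ where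
  toFun := signedRpow t
  invFun := signedRpow t⁻¹
  left_inv a := by rw [signedRpow_signedRpow, mul_inv_cancel₀ ht.ne', signedRpow_one]
  right_inv a := by rw [signedRpow_signedRpow, inv_mul_cancel₀ ht.ne', signedRpow_one]
  continuous_toFun := continuous_signedRpow ht
  continuous_invFun := continuous_signedRpow (inv_pos.mpr ht)

lemma rpow_max_neg_signedRpow_mul_le {p q : ℝ} (hp : 0 < p) (hq : 0 < q) (a c : ℝ) :
    max (-(signedRpow (p / q) a * signedRpow (p / q) c)) 0 ^ (q / 2) ≤ (|a - c| / 2) ^ p := by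
  have ht : p / q ≠ 0 := by positivity
  rw [← signedRpow_mul, ← signedRpow_neg, max_signedRpow_zero ht,
    ← rpow_mul (le_max_right _ _), show p / q * (q / 2) = p / 2 by field_simp]
  exact rpow_max_neg_mul_le_half_abs_sub_rpow hp a c

lemma half_abs_sub_signedRpow_rpow_le {p q δ R a c : ℝ} (hp : 0 < p) (hq : 0 < q)
    (hδ : δ ≤ 1 / 2) (ha : |a| ^ q ≤ R) (hc : |c| ^ q ≤ R) :
    (|signedRpow (q / p) a - signedRpow (q / p) c| / 2) ^ p
      ≤ max (-(a * c)) 0 ^ (q / 2) + R * powerMeanError p δ := by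
  have ht : q / p ≠ 0 := by positivity
  have hpow : ∀ x, |signedRpow (q / p) x| ^ p = |x| ^ q := fun x => by
    rw [abs_signedRpow ht, ← rpow_mul (abs_nonneg x), div_mul_cancel₀ q hp.ne']
  rcases le_or_gt 0 (a * c) with hac | hac
  · have hsign : 0 ≤ signedRpow (q / p) a * signedRpow (q / p) c := by
      rw [← signedRpow_mul]
      exact signedRpow_nonneg hac _
    calc _ ≤ R * powerMeanError p δ := half_abs_sub_rpow_le_of_mul_nonneg hp.le (by linarith)
            hsign (by rwa [hpow]) (by rwa [hpow])
      _ ≤ _ := le_add_of_nonneg_left (by positivity)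
  · have hsign : signedRpow (q / p) a * signedRpow (q / p) c < 0 := by
      rw [← signedRpow_mul]
      exact signedRpow_lt_zero hac _
    have hgeom : max (-(a * c)) 0 ^ (q / 2)
        = (|signedRpow (q / p) a| * |signedRpow (q / p) c|) ^ (p / 2) := by
      rw [max_eq_left (by linarith), abs_signedRpow ht, abs_signedRpow ht,
        ← mul_rpow (abs_nonneg a) (abs_nonneg c), ← rpow_mul (by positivity), ← abs_mul,
        abs_of_neg hac]
      congr 1
      field_simp
    rw [abs_sub_eq_abs_add_abs_of_mul_neg hsign, hgeom]
    exact half_add_rpow_le hp.le hδ (abs_nonneg _) (abs_nonneg _) (by rwa [hpow]) (by rwa [hpow])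

end SignedRpow

section Minimax

open Set

variable {α β : Type*}

def minimaxValue (F : Set (Set α)) (R : α → ℝ) : ℝ :=
  sInf ((fun B => sSup (R '' B)) '' F)

lemma minimaxValue_const_mul {c : ℝ} (hc : 0 ≤ c) (F : Set (Set α)) (R : α → ℝ) :
    minimaxValue F (fun x => c * R x) = c * minimaxValue F R := by
  have h : ∀ B : Set α, sSup ((fun x => c * R x) '' B) = c * sSup (R '' B) := fun B => by
    rw [← smul_eq_mul, ← Real.sSup_smul_of_nonneg hc, ← image_smul, image_image]
    rfl
  rw [minimaxValue, minimaxValue, ← smul_eq_mul, ← Real.sInf_smul_of_nonneg hc, ← image_smul,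
    image_image]
  simp_rw [h]
  rfl

/-- The hypothesis `m ≤ 0` accounts for the junk value `sSup = 0` of an empty or unbounded set. -/
lemma bddBelow_sSup_image {F : Set (Set α)} {R : α → ℝ} {m : ℝ} (hm : m ≤ 0)
    (h : ∀ B ∈ F, ∀ x ∈ B, m ≤ R x) : BddBelow ((fun B => sSup (R '' B)) '' F) := by
  refine ⟨m, ?_⟩
  rintro _ ⟨B, hB, rfl⟩
  by_cases hbdd : BddAbove (R '' B)
  · rcases B.eq_empty_or_nonempty with rfl | ⟨x, hx⟩
    · simpa using hm
    · exact (h B hB x hx).trans (le_csSup hbdd (mem_image_of_mem R hx))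
  · exact hm.trans_eq (Real.sSup_of_not_bddAbove hbdd).symm

lemma sSup_image_image_le_add {B : Set β} {R : α → ℝ} {R' : β → ℝ} {Φ : β → α}
    {c : ℝ} (hc : 0 ≤ c) (hbdd : BddAbove (R' '' B)) (h : ∀ x ∈ B, R (Φ x) ≤ R' x + c) :
    sSup (R '' (Φ '' B)) ≤ sSup (R' '' B) + c := by
  rcases B.eq_empty_or_nonempty with rfl | hB
  · simpa using hc
  rw [image_image]
  refine csSup_le (hB.image _) ?_
  rintro _ ⟨x, hx, rfl⟩
  exact (h x hx).trans (add_le_add_left (le_csSup hbdd (mem_image_of_mem R' hx)) c)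

lemma minimaxValue_le_add {F : Set (Set α)} {F' : Set (Set β)} {R : α → ℝ} {R' : β → ℝ}
    {c : ℝ} (Φ : β → α) (hΦ : ∀ B ∈ F', Φ '' B ∈ F) (hF : F.Nonempty → F'.Nonempty)
    (hc : 0 ≤ c) (hbdd : BddBelow ((fun B => sSup (R '' B)) '' F))
    (hbdd' : ∀ B ∈ F', BddAbove (R' '' B))
    (hR : ∀ B ∈ F', ∀ x ∈ B, R (Φ x) ≤ R' x + c) :
    minimaxValue F R ≤ minimaxValue F' R' + c := by
  rcases F'.eq_empty_or_nonempty with rfl | hF'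
  · have hF0 : F = ∅ := not_nonempty_iff_eq_empty.mp fun h => (hF h).ne_empty rfl
    simpa [minimaxValue, hF0] using hc
  rw [← sub_le_iff_le_add]
  refine le_csInf (hF'.image _) ?_
  rintro _ ⟨B, hB, rfl⟩
  rw [sub_le_iff_le_add]
  exact (csInf_le hbdd (mem_image_of_mem _ (hΦ B hB))).trans
    (sSup_image_image_le_add hc (hbdd' B hB) (hR B hB))

end Minimax

section Genus

open Set

variable {V : Type}

lemma genusGe_image {B : Set (V → ℝ)} {k : ℕ} {Φ : (V → ℝ) → V → ℝ}
    (hΦ : ContinuousOn Φ B) (hodd : ∀ x ∈ B, Φ (-x) = -Φ x) (hB : genusGe B k) :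
    genusGe (Φ '' B) k := by
  rintro m hm ⟨h, hc, hne, hodd'⟩
  refine hB m hm ⟨h ∘ Φ, hc.comp hΦ (mapsTo_image Φ B),
    fun x hx => hne _ (mem_image_of_mem Φ hx), fun x hx => ?_⟩
  simp only [Function.comp_apply, hodd x hx]
  exact hodd' _ (mem_image_of_mem Φ hx)

end Genus

section SignedGraph

open Real Set

variable {V : Type} [Fintype V] {G : SimpleGraph V} {w sgn : V → V → ℝ} {μ κ : V → ℝ}

lemma sgEdgeSum_mono {F F' : V → V → ℝ} (h : ∀ i j, G.Adj i j → F i j ≤ F' i j) :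
    sgEdgeSum G F ≤ sgEdgeSum G F' := by
  unfold sgEdgeSum
  gcongr with i _ j _
  split_ifs with hij
  · exact h i j hij
  · rfl

lemma sgEdgeSum_nonneg {F : V → V → ℝ} (h : ∀ i j, G.Adj i j → 0 ≤ F i j) :
    0 ≤ sgEdgeSum G F := by
  simpa [sgEdgeSum] using sgEdgeSum_mono (G := G) (F := 0) h

lemma sgEdgeSum_add (F F' : V → V → ℝ) :
    sgEdgeSum G (fun i j => F i j + F' i j) = sgEdgeSum G F + sgEdgeSum G F' := by
  simp only [sgEdgeSum, ← add_div, ← Finset.sum_add_distrib, ite_add_ite, add_zero]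

lemma sgEdgeSum_const_mul (c : ℝ) (F : V → V → ℝ) :
    sgEdgeSum G (fun i j => c * F i j) = c * sgEdgeSum G F := by
  simp only [sgEdgeSum, ← mul_div_assoc, Finset.mul_sum, mul_ite, mul_zero]

lemma rpow_le_inv_of_mem_pSphere (hμ : ∀ i, 0 < μ i) {p : ℝ} {f : V → ℝ}
    (hf : f ∈ pSphere μ p) (i : V) : |f i| ^ p ≤ (μ i)⁻¹ := by
  have h : μ i * |f i| ^ p ≤ 1 := (hf : ∑ j, μ j * |f j| ^ p = 1) ▸
    Finset.single_le_sum (f := fun j => μ j * |f j| ^ p)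
      (fun j _ => mul_nonneg (hμ j).le (rpow_nonneg (abs_nonneg _) _)) (Finset.mem_univ i)
  rwa [← one_div, le_div_iff₀' (hμ i)]

lemma rpow_le_sum_inv_of_mem_pSphere (hμ : ∀ i, 0 < μ i) {p : ℝ} {f : V → ℝ}
    (hf : f ∈ pSphere μ p) (i : V) : |f i| ^ p ≤ ∑ j, (μ j)⁻¹ :=
  (rpow_le_inv_of_mem_pSphere hμ hf i).trans
    (Finset.single_le_sum (fun j _ => (inv_pos.mpr (hμ j)).le) (Finset.mem_univ i))

lemma abs_sum_mul_rpow_le_of_mem_pSphere (hμ : ∀ i, 0 < μ i) (κ : V → ℝ) {p : ℝ}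
    {f : V → ℝ} (hf : f ∈ pSphere μ p) :
    |∑ i, κ i * |f i| ^ p| ≤ ∑ i, |κ i| / μ i := by
  refine (Finset.abs_sum_le_sum_abs _ _).trans (Finset.sum_le_sum fun i _ => ?_)
  rw [abs_mul, abs_of_nonneg (rpow_nonneg (abs_nonneg _) _), div_eq_mul_inv]
  exact mul_le_mul_of_nonneg_left (rpow_le_inv_of_mem_pSphere hμ hf i) (abs_nonneg _)

lemma signedRpow_mem_pSphere {p q : ℝ} (hp : p ≠ 0) (hq : q ≠ 0) {g : V → ℝ}
    (hg : g ∈ pSphere μ q) : (fun i => signedRpow (q / p) (g i)) ∈ pSphere μ p := by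
  have h : ∀ x : ℝ, |signedRpow (q / p) x| ^ p = |x| ^ q := fun x => by
    rw [abs_signedRpow (div_ne_zero hq hp), ← rpow_mul (abs_nonneg x), div_mul_cancel₀ q hp]
  simpa [pSphere, h] using hg

lemma image_signedRpow_mem_genusFamily {p q : ℝ} (hp : 0 < p) (hq : 0 < q) {k : ℕ}
    {B : Set (V → ℝ)} (hB : B ∈ genusFamily μ q k) :
    (fun g i => signedRpow (q / p) (g i)) '' B ∈ genusFamily μ p k := by
  obtain ⟨hBS, hBc, hBsymm, hBg⟩ := hB
  let Φ : (V → ℝ) ≃ₜ (V → ℝ) :=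
    Homeomorph.piCongrRight fun _ => signedRpowHomeomorph (div_pos hq hp)
  have hodd : ∀ g : V → ℝ, Φ (-g) = -Φ g := fun g => funext fun i => signedRpow_neg _ (g i)
  refine ⟨?_, Φ.isClosedMap B hBc, ?_, genusGe_image Φ.continuous.continuousOn
    (fun g _ => hodd g) hBg⟩
  · rintro _ ⟨g, hg, rfl⟩
    exact signedRpow_mem_pSphere hp.ne' hq.ne' (hBS hg)
  · rintro _ ⟨g, hg, rfl⟩
    exact ⟨-g, hBsymm g hg, hodd g⟩

lemma two_rpow_neg_mul_sgRayleigh_of_mem_pSphere {p : ℝ} {f : V → ℝ}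
    (hf : f ∈ pSphere μ p) :
    2 ^ (-p) * sgRayleigh G w sgn μ κ p f
      = sgEdgeSum G (fun i j => w i j * (|f i - sgn i j * f j| / 2) ^ p)
        + 2 ^ (-p) * ∑ i, κ i * |f i| ^ p := by
  rw [sgRayleigh, show ∑ i, μ i * |f i| ^ p = 1 from hf, div_one, mul_add,
    ← sgEdgeSum_const_mul]
  congr 2
  funext i j
  rw [div_rpow (abs_nonneg _) zero_le_two, rpow_neg zero_le_two]
  ring

lemma cutRayleigh_of_mem_pSphere {q : ℝ} {g : V → ℝ} (hg : g ∈ pSphere μ q) :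
    cutRayleigh G w sgn μ q g
      = sgEdgeSum G (fun i j => w i j * max (-(g i * sgn i j * g j)) 0 ^ (q / 2)) := by
  rw [cutRayleigh, show ∑ i, μ i * |g i| ^ q = 1 from hg, div_one]

lemma sgEdgeSum_half_abs_sub_rpow_le (hw : ∀ i j, G.Adj i j → 0 < w i j)
    (hsgn : ∀ i j, G.Adj i j → sgn i j = 1 ∨ sgn i j = -1) (hμ : ∀ i, 0 < μ i)
    {p : ℝ} (hp : 0 ≤ p) {f : V → ℝ} (hf : f ∈ pSphere μ p) :
    sgEdgeSum G (fun i j => w i j * (|f i - sgn i j * f j| / 2) ^ p)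
      ≤ (∑ i, (μ i)⁻¹) * sgEdgeSum G w := by
  rw [← sgEdgeSum_const_mul]
  refine sgEdgeSum_mono fun i j hij => ?_
  rw [mul_comm]
  refine mul_le_mul_of_nonneg_right (half_abs_sub_rpow_le hp
    (rpow_le_sum_inv_of_mem_pSphere hμ hf i) ?_) (hw i j hij).le
  rw [abs_pm_one_mul (hsgn i j hij)]
  exact rpow_le_sum_inv_of_mem_pSphere hμ hf j

lemma cutRayleigh_nonneg (hw : ∀ i j, G.Adj i j → 0 < w i j) {q : ℝ} {g : V → ℝ}
    (hg : g ∈ pSphere μ q) : 0 ≤ cutRayleigh G w sgn μ q g := by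
  rw [cutRayleigh_of_mem_pSphere hg]
  exact sgEdgeSum_nonneg fun i j hij => mul_nonneg (hw i j hij).le (by positivity)

lemma cutRayleigh_le (hw : ∀ i j, G.Adj i j → 0 < w i j)
    (hsgn : ∀ i j, G.Adj i j → sgn i j = 1 ∨ sgn i j = -1) (hμ : ∀ i, 0 < μ i)
    {q : ℝ} (hq : 0 < q) {g : V → ℝ} (hg : g ∈ pSphere μ q) :
    cutRayleigh G w sgn μ q g ≤ (∑ i, (μ i)⁻¹) * sgEdgeSum G w := by
  refine (cutRayleigh_of_mem_pSphere hg).trans_le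
    ((sgEdgeSum_mono fun i j hij => ?_).trans
      (sgEdgeSum_half_abs_sub_rpow_le hw hsgn hμ hq.le hg))
  refine mul_le_mul_of_nonneg_left ?_ (hw i j hij).le
  simpa only [mul_assoc] using rpow_max_neg_mul_le_half_abs_sub_rpow hq (g i) (sgn i j * g j)

lemma abs_two_rpow_neg_mul_potential_le (hμ : ∀ i, 0 < μ i) {p : ℝ} {f : V → ℝ}
    (hf : f ∈ pSphere μ p) :
    |2 ^ (-p) * ∑ i, κ i * |f i| ^ p| ≤ 2 ^ (-p) * ∑ i, |κ i| / μ i := by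
  rw [abs_mul, abs_of_pos (by positivity)]
  exact mul_le_mul_of_nonneg_left (abs_sum_mul_rpow_le_of_mem_pSphere hμ κ hf) (by positivity)

lemma neg_le_two_rpow_neg_mul_sgRayleigh (hw : ∀ i j, G.Adj i j → 0 < w i j)
    (hμ : ∀ i, 0 < μ i) {p : ℝ} {f : V → ℝ} (hf : f ∈ pSphere μ p) :
    -(2 ^ (-p) * ∑ i, |κ i| / μ i) ≤ 2 ^ (-p) * sgRayleigh G w sgn μ κ p f := by
  rw [two_rpow_neg_mul_sgRayleigh_of_mem_pSphere hf]
  have hedge : 0 ≤ sgEdgeSum G (fun i j => w i j * (|f i - sgn i j * f j| / 2) ^ p) :=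
    sgEdgeSum_nonneg fun i j hij => mul_nonneg (hw i j hij).le (by positivity)
  linarith [neg_abs_le (2 ^ (-p) * ∑ i, κ i * |f i| ^ p),
    abs_two_rpow_neg_mul_potential_le (κ := κ) hμ hf]

lemma two_rpow_neg_mul_sgRayleigh_le (hw : ∀ i j, G.Adj i j → 0 < w i j)
    (hsgn : ∀ i j, G.Adj i j → sgn i j = 1 ∨ sgn i j = -1) (hμ : ∀ i, 0 < μ i)
    {p : ℝ} (hp : 0 ≤ p) {f : V → ℝ} (hf : f ∈ pSphere μ p) :
    2 ^ (-p) * sgRayleigh G w sgn μ κ p f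
      ≤ (∑ i, (μ i)⁻¹) * sgEdgeSum G w + 2 ^ (-p) * ∑ i, |κ i| / μ i := by
  rw [two_rpow_neg_mul_sgRayleigh_of_mem_pSphere hf]
  linarith [sgEdgeSum_half_abs_sub_rpow_le hw hsgn hμ hp hf,
    le_abs_self (2 ^ (-p) * ∑ i, κ i * |f i| ^ p),
    abs_two_rpow_neg_mul_potential_le (κ := κ) hμ hf]

lemma two_rpow_neg_mul_sgRayleigh_signedRpow_le (hw : ∀ i j, G.Adj i j → 0 < w i j)
    (hsgn : ∀ i j, G.Adj i j → sgn i j = 1 ∨ sgn i j = -1) (hμ : ∀ i, 0 < μ i)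
    {p q δ : ℝ} (hp : 0 < p) (hq : 0 < q) (hδ : δ ≤ 1 / 2) {g : V → ℝ}
    (hg : g ∈ pSphere μ q) :
    2 ^ (-p) * sgRayleigh G w sgn μ κ p (fun i => signedRpow (q / p) (g i))
      ≤ cutRayleigh G w sgn μ q g
        + ((∑ i, (μ i)⁻¹) * sgEdgeSum G w * powerMeanError p δ
          + 2 ^ (-p) * ∑ i, |κ i| / μ i) := by
  set R := ∑ i, (μ i)⁻¹
  set f := fun i => signedRpow (q / p) (g i)
  have hf : f ∈ pSphere μ p := signedRpow_mem_pSphere hp.ne' hq.ne' hg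
  have hedge : sgEdgeSum G (fun i j => w i j * (|f i - sgn i j * f j| / 2) ^ p)
      ≤ cutRayleigh G w sgn μ q g + R * sgEdgeSum G w * powerMeanError p δ := by
    calc _ ≤ sgEdgeSum G (fun i j => w i j * max (-(g i * sgn i j * g j)) 0 ^ (q / 2)
            + R * powerMeanError p δ * w i j) := by
          refine sgEdgeSum_mono fun i j hij => ?_
          rw [mul_comm (R * _), ← mul_add]
          refine mul_le_mul_of_nonneg_left ?_ (hw i j hij).le
          rw [← signedRpow_pm_one_mul (hsgn i j hij), mul_assoc]
          refine half_abs_sub_signedRpow_rpow_le hp hq hδ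
            (rpow_le_sum_inv_of_mem_pSphere hμ hg i) ?_
          rw [abs_pm_one_mul (hsgn i j hij)]
          exact rpow_le_sum_inv_of_mem_pSphere hμ hg j
      _ = _ := by
          rw [sgEdgeSum_add, sgEdgeSum_const_mul, cutRayleigh_of_mem_pSphere hg]
          ring
  rw [two_rpow_neg_mul_sgRayleigh_of_mem_pSphere hf]
  linarith [le_abs_self (2 ^ (-p) * ∑ i, κ i * |f i| ^ p),
    abs_two_rpow_neg_mul_potential_le (κ := κ) hμ hf]

lemma cutRayleigh_signedRpow_le (hw : ∀ i j, G.Adj i j → 0 < w i j)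
    (hsgn : ∀ i j, G.Adj i j → sgn i j = 1 ∨ sgn i j = -1) (hμ : ∀ i, 0 < μ i)
    {p q : ℝ} (hp : 0 < p) (hq : 0 < q) {f : V → ℝ} (hf : f ∈ pSphere μ p) :
    cutRayleigh G w sgn μ q (fun i => signedRpow (p / q) (f i))
      ≤ 2 ^ (-p) * sgRayleigh G w sgn μ κ p f + 2 ^ (-p) * ∑ i, |κ i| / μ i := by
  rw [cutRayleigh_of_mem_pSphere (signedRpow_mem_pSphere hq.ne' hp.ne' hf),
    two_rpow_neg_mul_sgRayleigh_of_mem_pSphere hf]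
  have hedge : sgEdgeSum G (fun i j => w i j
        * max (-(signedRpow (p / q) (f i) * sgn i j * signedRpow (p / q) (f j))) 0 ^ (q / 2))
      ≤ sgEdgeSum G (fun i j => w i j * (|f i - sgn i j * f j| / 2) ^ p) := by
    refine sgEdgeSum_mono fun i j hij => mul_le_mul_of_nonneg_left ?_ (hw i j hij).le
    rw [mul_assoc, ← signedRpow_pm_one_mul (hsgn i j hij)]
    exact rpow_max_neg_signedRpow_mul_le hp hq (f i) (sgn i j * f j)
  linarith [neg_abs_le (2 ^ (-p) * ∑ i, κ i * |f i| ^ p),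
    abs_two_rpow_neg_mul_potential_le (κ := κ) hμ hf]

lemma two_rpow_neg_mul_sum_abs_div_nonneg (hμ : ∀ i, 0 < μ i) (κ : V → ℝ) (p : ℝ) :
    0 ≤ 2 ^ (-p) * ∑ i, |κ i| / μ i :=
  mul_nonneg (by positivity) (Finset.sum_nonneg fun i _ => div_nonneg (abs_nonneg _) (hμ i).le)

lemma two_rpow_neg_mul_varEig_le (hw : ∀ i j, G.Adj i j → 0 < w i j)
    (hsgn : ∀ i j, G.Adj i j → sgn i j = 1 ∨ sgn i j = -1) (hμ : ∀ i, 0 < μ i)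
    {p q δ : ℝ} (hp : 0 < p) (hq : 0 < q) (hδ : δ ≤ 1 / 2) (k : ℕ) :
    2 ^ (-p) * varEig G w sgn μ κ p k
      ≤ minimaxValue (genusFamily μ q k) (cutRayleigh G w sgn μ q)
        + ((∑ i, (μ i)⁻¹) * sgEdgeSum G w * powerMeanError p δ
          + 2 ^ (-p) * ∑ i, |κ i| / μ i) := by
  have hK := two_rpow_neg_mul_sum_abs_div_nonneg hμ κ p
  have hc : 0 ≤ (∑ i, (μ i)⁻¹) * sgEdgeSum G w * powerMeanError p δ :=
    mul_nonneg (mul_nonneg (Finset.sum_nonneg fun i _ => (inv_pos.mpr (hμ i)).le)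
      (sgEdgeSum_nonneg fun i j hij => (hw i j hij).le)) (powerMeanError_nonneg hp.le δ)
  change 2 ^ (-p) * minimaxValue (genusFamily μ p k) (sgRayleigh G w sgn μ κ p) ≤ _
  rw [← minimaxValue_const_mul (rpow_nonneg zero_le_two (-p))]
  exact minimaxValue_le_add (fun g i => signedRpow (q / p) (g i))
    (fun B hB => image_signedRpow_mem_genusFamily hp hq hB)
    (fun ⟨B, hB⟩ => ⟨_, image_signedRpow_mem_genusFamily hq hp hB⟩) (by positivity)
    (bddBelow_sSup_image (neg_nonpos.mpr hK) fun B hB f hf =>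
      neg_le_two_rpow_neg_mul_sgRayleigh hw hμ (hB.1 hf))
    (fun B hB => ⟨_, by
      rintro _ ⟨g, hg, rfl⟩
      exact cutRayleigh_le hw hsgn hμ hq (hB.1 hg)⟩)
    (fun B hB g hg => two_rpow_neg_mul_sgRayleigh_signedRpow_le hw hsgn hμ hp hq hδ (hB.1 hg))

lemma minimaxValue_cutRayleigh_le (hw : ∀ i j, G.Adj i j → 0 < w i j)
    (hsgn : ∀ i j, G.Adj i j → sgn i j = 1 ∨ sgn i j = -1) (hμ : ∀ i, 0 < μ i)
    {p q : ℝ} (hp : 0 < p) (hq : 0 < q) (k : ℕ) :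
    minimaxValue (genusFamily μ q k) (cutRayleigh G w sgn μ q)
      ≤ 2 ^ (-p) * varEig G w sgn μ κ p k + 2 ^ (-p) * ∑ i, |κ i| / μ i := by
  change _ ≤ 2 ^ (-p) * minimaxValue (genusFamily μ p k) (sgRayleigh G w sgn μ κ p) + _
  rw [← minimaxValue_const_mul (rpow_nonneg zero_le_two (-p))]
  exact minimaxValue_le_add (fun f i => signedRpow (p / q) (f i))
    (fun B hB => image_signedRpow_mem_genusFamily hq hp hB)
    (fun ⟨B, hB⟩ => ⟨_, image_signedRpow_mem_genusFamily hp hq hB⟩)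
    (two_rpow_neg_mul_sum_abs_div_nonneg hμ κ p)
    (bddBelow_sSup_image le_rfl fun B hB g hg => cutRayleigh_nonneg hw (hB.1 hg))
    (fun B hB => ⟨_, by
      rintro _ ⟨f, hf, rfl⟩
      exact two_rpow_neg_mul_sgRayleigh_le hw hsgn hμ hp.le (hB.1 hf)⟩)
    (fun B hB f hf => cutRayleigh_signedRpow_le hw hsgn hμ hp hq (hB.1 hf))

lemma tendsto_powerMeanError :
    Tendsto (fun p : ℝ => powerMeanError p (p ^ (-(3 / 4 : ℝ)))) atTop (𝓝 0) := by
  have hnear : Tendsto (fun p : ℝ => exp (p ^ (-(1 / 2 : ℝ)) / 4) - 1) atTop (𝓝 0) := by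
    have h := (tendsto_rpow_neg_atTop (by norm_num : (0 : ℝ) < 1 / 2)).div_const 4
    rw [zero_div] at h
    simpa using ((continuous_exp.tendsto 0).comp h).sub_const 1
  have hfar : Tendsto (fun p : ℝ => exp (-(p ^ (1 / 4 : ℝ) / 2))) atTop (𝓝 0) :=
    tendsto_exp_neg_atTop_nhds_zero.comp
      ((tendsto_rpow_atTop (by norm_num)).atTop_div_const (by norm_num))
  rw [← add_zero (0 : ℝ)]
  refine (hnear.add hfar).congr' ?_
  filter_upwards [eventually_gt_atTop 0] with p hp
  have h1 : p * (p ^ (-(3 / 4 : ℝ))) ^ 2 = p ^ (-(1 / 2 : ℝ)) := by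
    rw [← rpow_natCast, ← rpow_mul hp.le, ← rpow_one_add' hp.le (by norm_num)]
    norm_num
  have h2 : p * p ^ (-(3 / 4 : ℝ)) = p ^ (1 / 4 : ℝ) := by
    rw [← rpow_one_add' hp.le (by norm_num)]
    norm_num
  simp only [powerMeanError, h1, h2]

end SignedGraph

theorem cutoff_eigenvalue_variational_general
    {V : Type} [Fintype V]
    (G : SimpleGraph V) (w sgn : V → V → ℝ) (μ κ : V → ℝ)
    (hw : ∀ i j, G.Adj i j → 0 < w i j)
    (hsgn : ∀ i j, G.Adj i j → sgn i j = 1 ∨ sgn i j = -1)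
    (hμ : ∀ i, 0 < μ i)
    (q : ℝ) (hq : 1 ≤ q) (k : ℕ) :
    Tendsto (fun p : ℝ => (2 : ℝ) ^ (-p) * varEig G w sgn μ κ p k) atTop
      (𝓝 (sInf ((fun B => sSup (cutRayleigh G w sgn μ q '' B)) '' genusFamily μ q k))) := by
  have hq0 : 0 < q := zero_lt_one.trans_le hq
  change Tendsto _ atTop (𝓝 (minimaxValue (genusFamily μ q k) (cutRayleigh G w sgn μ q)))
  set C := minimaxValue (genusFamily μ q k) (cutRayleigh G w sgn μ q)
  set K := ∑ i, |κ i| / μ i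
  set E := (∑ i, (μ i)⁻¹) * sgEdgeSum G w
  have hδ : ∀ᶠ p : ℝ in atTop, 0 < p ∧ p ^ (-(3 / 4 : ℝ)) ≤ 1 / 2 :=
    (eventually_gt_atTop 0).and
      ((tendsto_rpow_neg_atTop (by norm_num)).eventually (eventually_le_nhds (by norm_num)))
  have h2 : Tendsto (fun p : ℝ => (2 : ℝ) ^ (-p)) atTop (𝓝 0) :=
    (tendsto_rpow_atBot_of_base_gt_one 2 one_lt_two).comp tendsto_neg_atTop_atBot
  refine tendsto_of_tendsto_of_tendsto_of_le_of_le' (g := fun p => C - 2 ^ (-p) * K)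
    (h := fun p => C + (E * powerMeanError p (p ^ (-(3 / 4 : ℝ))) + 2 ^ (-p) * K)) ?_ ?_ ?_ ?_
  · simpa using tendsto_const_nhds.sub (h2.mul_const K)
  · simpa using tendsto_const_nhds.add ((tendsto_powerMeanError.const_mul E).add (h2.mul_const K))
  · exact hδ.mono fun p ⟨hp, _⟩ =>
      sub_le_iff_le_add.mpr (minimaxValue_cutRayleigh_le hw hsgn hμ hp hq0 k)
  · exact hδ.mono fun p ⟨hp, hδp⟩ => two_rpow_neg_mul_varEig_le hw hsgn hμ hp hq0 hδp k

/-- **Variational characterization of the cut-off adjacency eigenvalues**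
(Theorem `thm:varitional`). For every `q ≥ 1` and `1 ≤ k ≤ n`,
`L_k(Γ) = lim_{p→∞} 2^{-p} λ_k^{(p)}(Γ)` exists and equals
`min_{B ∈ F_k(S_q)} max_{g ∈ B} R^σ_{q,∞}(g)`. -/
theorem cutoff_eigenvalue_variational
    {V : Type} [Fintype V] [DecidableEq V] (n : ℕ) (hn : Fintype.card V = n)
    (G : SimpleGraph V) (w sgn : V → V → ℝ) (μ κ : V → ℝ)
    (hw : ∀ i j, G.Adj i j → 0 < w i j) (hwsymm : ∀ i j, w i j = w j i)
    (hsgn : ∀ i j, G.Adj i j → sgn i j = 1 ∨ sgn i j = -1)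
    (hsgnsymm : ∀ i j, sgn i j = sgn j i)
    (hμ : ∀ i, 0 < μ i)
    (q : ℝ) (hq : 1 ≤ q) (k : ℕ) (hk1 : 1 ≤ k) (hkn : k ≤ n) :
    Tendsto (fun p : ℝ => (2 : ℝ) ^ (-p) * varEig G w sgn μ κ p k) atTop
      (𝓝 (sInf ((fun B => sSup (cutRayleigh G w sgn μ q '' B)) '' genusFamily μ q k))) :=
  cutoff_eigenvalue_variational_general G w sgn μ κ hw hsgn hμ q hq k
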